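/- arXiv:1405.5767 — 2 statements merged into one kernel-verified Lean document; each statement's English description precedes it below -/
import Mathlib

section
/- For every r > 1 there exists a constant C(r) such that for every entire function f, every k ∈ ℕ, and every z ∈ ℂ: |f^{(k)}(z)|² ≤ (k!)² · C(r) · e^{|z|²} · (1+|z|)^{2k} · ∫_{B(z,r)} |f(ζ)|² e^{-|ζ|²} dV(ζ), where B(z,r) is the disk of radius r centered at z. -/
open MeasureTheory Complex Real Filter
open scoped Nat

/-- The Gaussian-weighted square integrand for the Fock space. -/
noncomputable def fockIntegrand (f : ℂ → ℂ) (z : ℂ) : ℝ := ‖f z‖ ^ 2 * Real.exp (-‖z‖ ^ 2)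

/-- The squared Fock norm: π⁻¹ ∫ |f|² e^{-|z|²} dV. -/
noncomputable def fockNormSq (f : ℂ → ℂ) : ℝ := π⁻¹ * ∫ z : ℂ, fockIntegrand f z

/-- Membership in the Fock space F²(ℂ): entire and Gaussian square-integrable. -/
def MemFock (f : ℂ → ℂ) : Prop := Differentiable ℂ f ∧ Integrable (fockIntegrand f)

/-!
For entire `g`, integrating the mean value property of `g²` over circles in polar coordinates gives
the area sub-mean inequality `π s² |g(w)|² ≤ ∫_{B(w,s)} |g|²`. Taking `g = f · e^{|w|²/2 - w̄ζ}`,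
with `|g|² = |f|² e^{-|ζ|²} e^{|ζ - w|²}`, recentres the Gaussian weight at `w` and bounds
`|f(w)|² e^{-|w|²}` by `e^{s²}/(π s²)` times the weighted integral of `|f|²` over `B(w, s)`.
Cauchy's estimate on the circle of radius `ρ = (1 + |z|)⁻¹` about `z` produces the factor
`k! ρ^{-k} = k! (1 + |z|)^k`; on that circle `|w|² ≤ |z|² + 3` and `B(w, r - 1) ⊆ B(z, r)`.
-/

open Metric Set ComplexConjugate

section CircleAverage

variable {E : Type*} [NormedAddCommGroup E] [NormedSpace ℝ E]

theorem norm_circleAverage_le (u : ℂ → E) (c : ℂ) (R : ℝ) :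
    ‖circleAverage u c R‖ ≤ circleAverage (fun ζ => ‖u ζ‖) c R := by
  rw [circleAverage_def, circleAverage_def, norm_smul, norm_inv,
    Real.norm_of_nonneg (by positivity), smul_eq_mul]
  gcongr
  exact intervalIntegral.norm_integral_le_integral_norm (by positivity)

theorem integral_Ioo_circleMap_eq_circleAverage (u : ℂ → E) (c : ℂ) (ρ : ℝ) :
    ∫ θ in Ioo (-π) π, u (circleMap c ρ θ) = (2 * π) • circleAverage u c ρ := by
  have hper : Function.Periodic (fun θ => u (circleMap c ρ θ)) (2 * π) :=
    fun θ => by simp only [periodic_circleMap c ρ θ]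
  have := hper.intervalIntegral_add_eq (-π) 0
  rw [zero_add, show -π + 2 * π = π by ring] at this
  rw [circleAverage_def, smul_inv_smul₀ (by positivity), ← this,
    intervalIntegral.integral_of_le (by linarith [pi_pos]), integral_Ioc_eq_integral_Ioo]

theorem circleMap_eq_add_polarCoord_symm (c : ℂ) (p : ℝ × ℝ) :
    circleMap c p.1 p.2 = c + Complex.polarCoord.symm p := by
  simp [circleMap, Complex.polarCoord_symm_apply, Complex.exp_mul_I, ← Complex.ofReal_cos,
    ← Complex.ofReal_sin]

theorem setIntegral_ball_eq_integral_circleAverage [CompleteSpace E] {u : ℂ → E}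
    (hu : Continuous u) (c : ℂ) (s : ℝ) :
    ∫ ζ in ball c s, u ζ = (2 * π) • ∫ ρ in Ioo 0 s, ρ • circleAverage u c ρ := by
  set T : Set (ℝ × ℝ) := Ioo 0 s ×ˢ Ioo (-π) π
  have hG : IntegrableOn (fun p : ℝ × ℝ => p.1 • u (circleMap c p.1 p.2)) T
      (volume.prod volume) := by
    rw [← Measure.volume_eq_prod]
    exact ((by fun_prop : Continuous fun p : ℝ × ℝ => p.1 • u (circleMap c p.1 p.2))
      |>.continuousOn.integrableOn_compact (isCompact_Icc.prod isCompact_Icc)).mono_set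
      (prod_mono Ioo_subset_Icc_self Ioo_subset_Icc_self)
  have hpolar : ∫ ζ in ball c s, u ζ = ∫ p in T, p.1 • u (circleMap c p.1 p.2) := by
    rw [← integral_indicator measurableSet_ball, ← integral_add_left_eq_self _ c,
      ← Complex.integral_comp_polarCoord_symm,
      ← integral_indicator polarCoord.open_target.measurableSet,
      ← integral_indicator (measurableSet_Ioo.prod measurableSet_Ioo)]
    congr 1 with p
    simp only [indicator, polarCoord_target, mem_prod, mem_Ioi, mem_Ioo, mem_ball, dist_eq_norm,
      ← circleMap_eq_add_polarCoord_symm, circleMap_sub_center, norm_circleMap_zero]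
    split_ifs <;> simp_all [abs_of_pos]
  rw [hpolar, Measure.volume_eq_prod, setIntegral_prod _ hG, ← integral_smul]
  refine setIntegral_congr_fun measurableSet_Ioo fun ρ _ => ?_
  rw [integral_smul, integral_Ioo_circleMap_eq_circleAverage, smul_comm]

end CircleAverage

theorem mul_le_setIntegral_ball_of_le_circleAverage {u : ℂ → ℝ} (hu : Continuous u) {c : ℂ}
    {s : ℝ} (hs : 0 ≤ s) (hmean : ∀ ρ ∈ Ioo 0 s, u c ≤ circleAverage u c ρ) :
    π * s ^ 2 * u c ≤ ∫ ζ in ball c s, u ζ := by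
  have hint : ∀ v : ℝ → ℝ, Continuous v → IntegrableOn v (Ioo 0 s) := fun v hv =>
    (hv.continuousOn.integrableOn_compact isCompact_Icc).mono_set Ioo_subset_Icc_self
  have hlin : ∫ ρ in Ioo 0 s, ρ * u c = s ^ 2 / 2 * u c := by
    rw [integral_mul_const, ← integral_Ioc_eq_integral_Ioo, ← intervalIntegral.integral_of_le hs,
      integral_id]
    ring
  calc π * s ^ 2 * u c = 2 * π * ∫ ρ in Ioo 0 s, ρ * u c := by rw [hlin]; ring
    _ ≤ 2 * π * ∫ ρ in Ioo 0 s, ρ * circleAverage u c ρ := by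
      refine mul_le_mul_of_nonneg_left ?_ (by positivity)
      exact setIntegral_mono_on (hint _ (by fun_prop)) (hint _ (by fun_prop)) measurableSet_Ioo
        fun ρ hρ => mul_le_mul_of_nonneg_left (hmean ρ hρ) hρ.1.le
    _ = ∫ ζ in ball c s, u ζ := (setIntegral_ball_eq_integral_circleAverage hu c s).symm

theorem DiffContOnCl.sq_norm_le_circleAverage {g : ℂ → ℂ} {c : ℂ} {R : ℝ}
    (hg : DiffContOnCl ℂ g (ball c |R|)) :
    ‖g c‖ ^ 2 ≤ Real.circleAverage (fun ζ => ‖g ζ‖ ^ 2) c R := by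
  have hmean : Real.circleAverage (fun ζ => g ζ * g ζ) c R = g c * g c :=
    (hg.smul hg).circleAverage
  calc ‖g c‖ ^ 2 = ‖Real.circleAverage (fun ζ => g ζ * g ζ) c R‖ := by rw [hmean, norm_mul, sq]
    _ ≤ Real.circleAverage (fun ζ => ‖g ζ * g ζ‖) c R := norm_circleAverage_le _ c R
    _ = Real.circleAverage (fun ζ => ‖g ζ‖ ^ 2) c R := by simp only [norm_mul, sq]

theorem Differentiable.mul_sq_norm_le_setIntegral_ball {g : ℂ → ℂ} (hg : Differentiable ℂ g)
    (c : ℂ) {s : ℝ} (hs : 0 ≤ s) :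
    π * s ^ 2 * ‖g c‖ ^ 2 ≤ ∫ ζ in ball c s, ‖g ζ‖ ^ 2 :=
  mul_le_setIntegral_ball_of_le_circleAverage (hg.continuous.norm.pow 2) hs fun _ _ =>
    hg.diffContOnCl.sq_norm_le_circleAverage

theorem continuous_fockIntegrand {f : ℂ → ℂ} (hf : Continuous f) :
    Continuous (fockIntegrand f) := by
  unfold fockIntegrand; fun_prop

theorem fockIntegrand_nonneg (f : ℂ → ℂ) (ζ : ℂ) : 0 ≤ fockIntegrand f ζ := by
  unfold fockIntegrand; positivity

theorem sq_norm_mul_cexp_eq_fockIntegrand_mul (f : ℂ → ℂ) (w ζ : ℂ) :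
    ‖f ζ * cexp ((‖w‖ ^ 2 / 2 : ℝ) - conj w * ζ)‖ ^ 2 =
      fockIntegrand f ζ * Real.exp (‖ζ - w‖ ^ 2) := by
  rw [fockIntegrand, norm_mul, mul_pow, Complex.norm_exp, ← Real.exp_nat_mul, mul_assoc,
    ← Real.exp_add]
  congr 2
  simp only [Complex.sub_re, Complex.ofReal_re, Complex.mul_re, Complex.conj_re,
    Complex.conj_im, Complex.sq_norm, Complex.normSq_apply, Complex.sub_im]
  push_cast
  ring

theorem Differentiable.mul_fockIntegrand_le_setIntegral_ball {f : ℂ → ℂ}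
    (hf : Differentiable ℂ f) (w : ℂ) {s : ℝ} (hs : 0 ≤ s) :
    π * s ^ 2 * fockIntegrand f w ≤ Real.exp (s ^ 2) * ∫ ζ in ball w s, fockIntegrand f ζ := by
  set g : ℂ → ℂ := fun ζ => f ζ * cexp ((‖w‖ ^ 2 / 2 : ℝ) - conj w * ζ)
  have hg : Differentiable ℂ g := hf.mul (by fun_prop)
  have hint : ∀ v : ℂ → ℝ, Continuous v → IntegrableOn v (ball w s) := fun v hv =>
    (hv.continuousOn.integrableOn_compact (isCompact_closedBall w s)).mono_set
      ball_subset_closedBall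
  calc π * s ^ 2 * fockIntegrand f w = π * s ^ 2 * ‖g w‖ ^ 2 := by
        rw [sq_norm_mul_cexp_eq_fockIntegrand_mul, sub_self, norm_zero]; simp
    _ ≤ ∫ ζ in ball w s, ‖g ζ‖ ^ 2 := hg.mul_sq_norm_le_setIntegral_ball w hs
    _ ≤ ∫ ζ in ball w s, Real.exp (s ^ 2) * fockIntegrand f ζ := by
      refine setIntegral_mono_on (hint _ (hg.continuous.norm.pow 2))
        (hint _ (continuous_const.mul (continuous_fockIntegrand hf.continuous)))
        measurableSet_ball fun ζ hζ => ?_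
      rw [sq_norm_mul_cexp_eq_fockIntegrand_mul, mul_comm]
      gcongr
      · exact fockIntegrand_nonneg f ζ
      · exact (mem_ball_iff_norm.1 hζ).le
    _ = Real.exp (s ^ 2) * ∫ ζ in ball w s, fockIntegrand f ζ := integral_const_mul _ _

theorem Differentiable.sq_norm_le_of_norm_sub_mul_le_one {f : ℂ → ℂ} (hf : Differentiable ℂ f)
    {t : ℝ} (ht : 0 < t) {z w : ℂ} (hw : ‖w - z‖ * (1 + ‖z‖) ≤ 1) :
    ‖f w‖ ^ 2 ≤ (π * t ^ 2)⁻¹ * Real.exp (t ^ 2 + 3) * Real.exp (‖z‖ ^ 2) *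
      ∫ ζ in ball z (t + 1), fockIntegrand f ζ := by
  have hd : ‖w - z‖ ≤ 1 := by nlinarith [norm_nonneg (w - z), norm_nonneg z]
  have hnorm : ‖w‖ ^ 2 ≤ ‖z‖ ^ 2 + 3 := by
    have := norm_le_norm_add_norm_sub' w z
    nlinarith [norm_nonneg (w - z), norm_nonneg z, norm_nonneg w]
  have hmono : ∫ ζ in ball w t, fockIntegrand f ζ ≤ ∫ ζ in ball z (t + 1), fockIntegrand f ζ :=
    setIntegral_mono_set
      (((continuous_fockIntegrand hf.continuous).continuousOn.integrableOn_compact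
        (isCompact_closedBall z (t + 1))).mono_set ball_subset_closedBall)
      (.of_forall (fockIntegrand_nonneg f))
      (ball_subset_ball' (by rw [dist_eq_norm]; linarith)).eventuallyLE
  calc ‖f w‖ ^ 2 = (π * t ^ 2)⁻¹ * Real.exp (‖w‖ ^ 2) * (π * t ^ 2 * fockIntegrand f w) := by
        rw [fockIntegrand, Real.exp_neg]; field_simp
    _ ≤ (π * t ^ 2)⁻¹ * Real.exp (‖z‖ ^ 2 + 3) *
          (Real.exp (t ^ 2) * ∫ ζ in ball z (t + 1), fockIntegrand f ζ) := by
      have := (hf.mul_fockIntegrand_le_setIntegral_ball w ht.le).trans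
        (mul_le_mul_of_nonneg_left hmono (Real.exp_pos _).le)
      gcongr
      · exact mul_nonneg (by positivity) (fockIntegrand_nonneg f w)
    _ = _ := by rw [Real.exp_add, Real.exp_add]; ring

/-- Local estimate for derivatives of entire functions:
|f^{(k)}(z)|² ≤ (k!)² C(r) e^{|z|²} (1+|z|)^{2k} ∫_{B(z,r)} |f|² e^{-|ζ|²} dV. -/
theorem fock_derivative_local_estimate (r : ℝ) (hr : 1 < r) :
    ∃ C : ℝ, 0 < C ∧ ∀ f : ℂ → ℂ, Differentiable ℂ f → ∀ (k : ℕ) (z : ℂ),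
      ‖iteratedDeriv k f z‖ ^ 2 ≤
        ((k ! : ℝ)) ^ 2 * C * Real.exp (‖z‖ ^ 2) * (1 + ‖z‖) ^ (2 * k) *
          ∫ ζ in Metric.ball z r, fockIntegrand f ζ := by
  refine ⟨(π * (r - 1) ^ 2)⁻¹ * Real.exp ((r - 1) ^ 2 + 3), by positivity, fun f hf k z => ?_⟩
  set K := (π * (r - 1) ^ 2)⁻¹ * Real.exp ((r - 1) ^ 2 + 3) * Real.exp (‖z‖ ^ 2) *
    ∫ ζ in ball z r, fockIntegrand f ζ
  have hK : 0 ≤ K := by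
    have := setIntegral_nonneg (μ := volume) (measurableSet_ball (x := z) (ε := r))
      fun ζ _ => fockIntegrand_nonneg f ζ
    positivity
  have hρ : 0 < (1 + ‖z‖)⁻¹ := by positivity
  have hsphere : ∀ w ∈ sphere z (1 + ‖z‖)⁻¹, ‖f w‖ ≤ √K := fun w hw => by
    refine Real.le_sqrt_of_sq_le ?_
    have := hf.sq_norm_le_of_norm_sub_mul_le_one (sub_pos.2 hr) (z := z) (w := w)
      (by rw [mem_sphere_iff_norm.1 hw, inv_mul_cancel₀ (by positivity)])
    rwa [sub_add_cancel] at this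
  calc ‖iteratedDeriv k f z‖ ^ 2 ≤ (k ! * √K / (1 + ‖z‖)⁻¹ ^ k) ^ 2 := by
        gcongr
        exact Complex.norm_iteratedDeriv_le_of_forall_mem_sphere_norm_le k hρ hf.diffContOnCl
          hsphere
    _ = _ := by
      rw [div_pow, mul_pow, Real.sq_sqrt hK, ← pow_mul, inv_pow, div_inv_eq_mul, mul_comm k 2]
      ring
end

section
/- Let μ be a positive Borel measure on ℂ, k ∈ ℕ, and r > 0. If there exists a constant ϖ such that ∫_ℂ |f^{(k)}(z)|² e^{-|z|²} dμ(z) ≤ ϖ‖f‖²_{F²} for all f ∈ F²(ℂ), then sup_{z∈ℂ} μ(B(z,r)) (1+|z|²)^k < ∞. -/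
/-!
Test the Carleson inequality on the normalized reproducing kernel `k_w`: it has Fock norm `1`
and `|k_w^{(k)}(z)|² e^{-|z|²} = |w|^{2k} e^{-|z-w|²} ≥ |w|^{2k} e^{-s²}` on `B(w, s)`, so
`μ(B(w, s)) |w|^{2k} ≤ ϖ e^{s²}`. For an arbitrary centre `z`, one of `w = z ± 1` satisfies
`1 + |z|² ≤ |w|²`, and `B(z, r) ⊆ B(w, r + 1)`.
-/

open MeasureTheory Complex Real Filter

open ComplexConjugate Metric

theorem integrable_exp_neg_sq_norm {V : Type*} [NormedAddCommGroup V] [InnerProductSpace ℝ V]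
    [FiniteDimensional ℝ V] [MeasurableSpace V] [BorelSpace V] :
    Integrable (fun v : V => rexp (-‖v‖ ^ 2)) := by
  refine (GaussianFourier.integrable_cexp_neg_mul_sq_norm_add (V := V) (b := 1)
    (by simp) 0 0).norm.congr (.of_forall fun v => ?_)
  simp [Complex.norm_exp, ← Complex.ofReal_pow]

theorem integral_exp_neg_sq_norm_complex : ∫ z : ℂ, rexp (-‖z‖ ^ 2) = π := by
  simpa using GaussianFourier.integral_rexp_neg_mul_sq_norm (V := ℂ) one_pos

theorem ofReal_exp_neg_sq_mul_measure_ball_le {X : Type*} [PseudoMetricSpace X]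
    [MeasurableSpace X] [OpensMeasurableSpace X] (μ : Measure X) (w : X) (s : ℝ) :
    ENNReal.ofReal (rexp (-s ^ 2)) * μ (ball w s) ≤
      ∫⁻ z, ENNReal.ofReal (rexp (-dist z w ^ 2)) ∂μ :=
  calc ENNReal.ofReal (rexp (-s ^ 2)) * μ (ball w s)
      = ∫⁻ _ in ball w s, ENNReal.ofReal (rexp (-s ^ 2)) ∂μ :=
        (setLIntegral_const _ _).symm
    _ ≤ ∫⁻ z in ball w s, ENNReal.ofReal (rexp (-dist z w ^ 2)) ∂μ := by
      refine setLIntegral_mono' isOpen_ball.measurableSet fun z hz => ?_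
      gcongr
      exact (mem_ball.1 hz).le
    _ ≤ _ := setLIntegral_le_lintegral _ _

/-- The normalized reproducing kernel `k_w` of `F²(ℂ)`. -/
noncomputable def fockKernel (w z : ℂ) : ℂ := cexp (-‖w‖ ^ 2 / 2) * cexp (conj w * z)

theorem norm_fockKernel_sq_mul_exp (w z : ℂ) :
    ‖fockKernel w z‖ ^ 2 * rexp (-‖z‖ ^ 2) = rexp (-‖z - w‖ ^ 2) := by
  rw [fockKernel, norm_mul, Complex.norm_exp, Complex.norm_exp, mul_pow, ← Real.exp_nat_mul,
    ← Real.exp_nat_mul, ← Real.exp_add, ← Real.exp_add]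
  congr 1
  rw [← ofReal_pow, ← ofReal_neg, ← ofReal_ofNat, ← ofReal_div, ofReal_re]
  simp only [Complex.sq_norm, Complex.normSq_apply, Complex.sub_re, Complex.sub_im,
    Complex.mul_re, Complex.conj_re, Complex.conj_im]
  ring

theorem iteratedDeriv_fockKernel (k : ℕ) (w : ℂ) :
    iteratedDeriv k (fockKernel w) = fun z => conj w ^ k * fockKernel w z := by
  funext z
  unfold fockKernel
  rw [iteratedDeriv_const_mul_field, iteratedDeriv_cexp_const_mul]
  ring

theorem differentiable_fockKernel (w : ℂ) : Differentiable ℂ (fockKernel w) := by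
  unfold fockKernel; fun_prop

theorem fockIntegrand_fockKernel (w : ℂ) :
    fockIntegrand (fockKernel w) = fun z => rexp (-‖z - w‖ ^ 2) :=
  funext (norm_fockKernel_sq_mul_exp w)

theorem memFock_fockKernel (w : ℂ) : MemFock (fockKernel w) :=
  ⟨differentiable_fockKernel w, by
    rw [fockIntegrand_fockKernel]; exact integrable_exp_neg_sq_norm.comp_sub_right w⟩

theorem fockNormSq_fockKernel (w : ℂ) : fockNormSq (fockKernel w) = 1 := by
  rw [fockNormSq, fockIntegrand_fockKernel,
    integral_sub_right_eq_self (fun z : ℂ => rexp (-‖z‖ ^ 2)) w,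
    integral_exp_neg_sq_norm_complex, inv_mul_cancel₀ pi_ne_zero]

theorem exists_dist_le_one_one_add_sq_le (w : ℂ) :
    ∃ w' : ℂ, dist w w' ≤ 1 ∧ 1 + ‖w‖ ^ 2 ≤ ‖w'‖ ^ 2 := by
  rcases le_total 0 w.re with h | h
  · refine ⟨w + 1, by simp, ?_⟩
    simp only [Complex.sq_norm, normSq_apply, add_re, add_im, one_re, one_im]
    nlinarith
  · refine ⟨w - 1, by simp, ?_⟩
    simp only [Complex.sq_norm, normSq_apply, sub_re, sub_im, one_re, one_im]
    nlinarith

def IsFockCarleson (k : ℕ) (ϖ : ℝ) (μ : Measure ℂ) : Prop :=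
  ∀ f : ℂ → ℂ, MemFock f →
    ∫⁻ z, ENNReal.ofReal (‖iteratedDeriv k f z‖ ^ 2 * Real.exp (-‖z‖ ^ 2)) ∂μ ≤
      ENNReal.ofReal (ϖ * fockNormSq f)

theorem IsFockCarleson.measure_ball_mul_le {k : ℕ} {ϖ : ℝ} {μ : Measure ℂ}
    (h : IsFockCarleson k ϖ μ) (w : ℂ) (s : ℝ) :
    μ (ball w s) * ENNReal.ofReal (‖w‖ ^ (2 * k)) ≤ ENNReal.ofReal (ϖ * rexp (s ^ 2)) := by
  have hintegrand (z : ℂ) :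
      ENNReal.ofReal (‖iteratedDeriv k (fockKernel w) z‖ ^ 2 * rexp (-‖z‖ ^ 2)) =
        ENNReal.ofReal (‖w‖ ^ (2 * k)) * ENNReal.ofReal (rexp (-dist z w ^ 2)) := by
    rw [iteratedDeriv_fockKernel, norm_mul, norm_pow, RCLike.norm_conj, mul_pow, mul_assoc,
      norm_fockKernel_sq_mul_exp, ← pow_mul, mul_comm k, dist_eq_norm,
      ENNReal.ofReal_mul (by positivity)]
  have htest := h (fockKernel w) (memFock_fockKernel w)
  simp only [hintegrand, fockNormSq_fockKernel, mul_one] at htest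
  rw [lintegral_const_mul' _ _ ENNReal.ofReal_ne_top] at htest
  have hball : ENNReal.ofReal (rexp (-s ^ 2)) * (μ (ball w s) * ENNReal.ofReal (‖w‖ ^ (2 * k)))
      ≤ ENNReal.ofReal ϖ :=
    calc _ = ENNReal.ofReal (‖w‖ ^ (2 * k)) *
          (ENNReal.ofReal (rexp (-s ^ 2)) * μ (ball w s)) := by ring
      _ ≤ _ := by gcongr; exact ofReal_exp_neg_sq_mul_measure_ball_le μ w s
      _ ≤ ENNReal.ofReal ϖ := htest
  have hexp : ENNReal.ofReal (rexp (s ^ 2)) * ENNReal.ofReal (rexp (-s ^ 2)) = 1 := by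
    rw [← ENNReal.ofReal_mul (exp_pos _).le, ← Real.exp_add, add_neg_cancel, Real.exp_zero,
      ENNReal.ofReal_one]
  calc μ (ball w s) * ENNReal.ofReal (‖w‖ ^ (2 * k))
      = ENNReal.ofReal (rexp (s ^ 2)) * (ENNReal.ofReal (rexp (-s ^ 2)) *
          (μ (ball w s) * ENNReal.ofReal (‖w‖ ^ (2 * k)))) := by
        rw [← mul_assoc, hexp, one_mul]
    _ ≤ ENNReal.ofReal (rexp (s ^ 2)) * ENNReal.ofReal ϖ := by gcongr
    _ = ENNReal.ofReal (ϖ * rexp (s ^ 2)) := by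
        rw [mul_comm, ENNReal.ofReal_mul' (exp_pos _).le]

theorem kFC_measure_necessary_general (μ : Measure ℂ) (k : ℕ) (r : ℝ)
    (ϖ : ℝ)
    (h : ∀ f : ℂ → ℂ, MemFock f →
      ∫⁻ z, ENNReal.ofReal (‖iteratedDeriv k f z‖ ^ 2 * Real.exp (-‖z‖ ^ 2)) ∂μ ≤
        ENNReal.ofReal (ϖ * fockNormSq f)) :
    ∃ M : ℝ, ∀ z : ℂ, μ (Metric.ball z r) * ENNReal.ofReal ((1 + ‖z‖ ^ 2) ^ k) ≤
      ENNReal.ofReal M := by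
  have hμ : IsFockCarleson k ϖ μ := h
  refine ⟨ϖ * rexp ((r + 1) ^ 2), fun z => ?_⟩
  obtain ⟨w, hzw, hw⟩ := exists_dist_le_one_one_add_sq_le z
  calc μ (Metric.ball z r) * ENNReal.ofReal ((1 + ‖z‖ ^ 2) ^ k)
      ≤ μ (ball w (r + 1)) * ENNReal.ofReal (‖w‖ ^ (2 * k)) := by
        gcongr μ ?_ * ENNReal.ofReal ?_
        · exact ball_subset_ball' (by linarith)
        · rw [pow_mul]; gcongr
    _ ≤ ENNReal.ofReal (ϖ * rexp ((r + 1) ^ 2)) := hμ.measure_ball_mul_le w (r + 1)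

/-- Necessity in the characterization of k-Fock-Carleson measures:
if ∫ |f^{(k)}|² e^{-|z|²} dμ ≤ ϖ ‖f‖²_{F²} for all f ∈ F², then
sup_z μ(B(z,r))(1+|z|²)^k < ∞ for every r > 0. -/
theorem kFC_measure_necessary (μ : Measure ℂ) (k : ℕ) (r : ℝ) (hr : 0 < r)
    (ϖ : ℝ)
    (h : ∀ f : ℂ → ℂ, MemFock f →
      ∫⁻ z, ENNReal.ofReal (‖iteratedDeriv k f z‖ ^ 2 * Real.exp (-‖z‖ ^ 2)) ∂μ ≤
        ENNReal.ofReal (ϖ * fockNormSq f)) :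
    ∃ M : ℝ, ∀ z : ℂ, μ (Metric.ball z r) * ENNReal.ofReal ((1 + ‖z‖ ^ 2) ^ k) ≤
      ENNReal.ofReal M :=
  kFC_measure_necessary_general μ k r ϖ h
end
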